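/- arXiv:1011.2728 — 2 statements merged into one kernel-verified Lean document; each statement's English description precedes it below -/
import Mathlib

section
/- Let n ≥ 3, m ≥ 1+δ > 1, and define the weighted Weyl curvature A = W + (m/((m+n-2)(n-2))) Ric₀∧g + (m/(2(m+n-1)(m+n-2)))·((m-1)R/(n(n-1)) + μ)·g∧g with μ = 1. Then |A|² ≤ |Rm + (1/(2(m-1))) g∧g|² ≤ C(n,δ)·|A|² where C = ((m+n-1)(m+n-2)/(m(m-1)))² and moreover C ≥ 1 and C is bounded above in terms of n and δ alone. -/
/-!
Relative to the orthogonal pieces `W`, `Ric₀∧g`, `g∧g`, the tensor `A` is obtained from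
`Rm + g∧g/(2(m-1))` by scaling the `Ric₀∧g`-component by `s = m/(m+n-2)` and the
`g∧g`-component by `t = 1/c`, where `c = (m+n-1)(m+n-2)/(m(m-1))` and `0 < t ≤ s ≤ 1`;
Pythagoras then compares the squared norms componentwise, with `C = c²`. Since
`c = (1 + (n-1)/m)(1 + (n-1)/(m-1))` is decreasing in `m`, it is bounded by its value at
`m = 1 + δ`.
-/

open RealInnerProductSpace

section OrthogonalTriple

variable {V : Type*} [NormedAddCommGroup V] [InnerProductSpace ℝ V] {x y z : V}

theorem norm_add_smul_add_smul_sq (hxy : ⟪x, y⟫ = 0) (hxz : ⟪x, z⟫ = 0) (hyz : ⟪y, z⟫ = 0)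
    (a b : ℝ) : ‖x + a • y + b • z‖ ^ 2 = ‖x‖ ^ 2 + a ^ 2 * ‖y‖ ^ 2 + b ^ 2 * ‖z‖ ^ 2 := by
  rw [norm_add_sq_real, norm_add_sq_real, inner_add_left]
  simp [inner_smul_left, inner_smul_right, hxy, hxz, hyz, norm_smul, mul_pow]

theorem norm_add_smul_add_smul_sq_le (hxy : ⟪x, y⟫ = 0) (hxz : ⟪x, z⟫ = 0) (hyz : ⟪y, z⟫ = 0)
    {s t : ℝ} (hs : |s| ≤ 1) (ht : |t| ≤ 1) (a b : ℝ) :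
    ‖x + (s * a) • y + (t * b) • z‖ ^ 2 ≤ ‖x + a • y + b • z‖ ^ 2 := by
  rw [norm_add_smul_add_smul_sq hxy hxz hyz, norm_add_smul_add_smul_sq hxy hxz hyz]
  have scaled_le {r : ℝ} (hr : |r| ≤ 1) (c N : ℝ) : (r * c) ^ 2 * N ^ 2 ≤ c ^ 2 * N ^ 2 := by
    rw [mul_pow, mul_assoc]
    exact mul_le_of_le_one_left (by positivity) (sq_le_one_iff_abs_le_one r |>.2 hr)
  linarith [scaled_le hs a ‖y‖, scaled_le ht b ‖z‖]

theorem norm_add_smul_add_smul_sq_le_inv_sq_mul (hxy : ⟪x, y⟫ = 0) (hxz : ⟪x, z⟫ = 0)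
    (hyz : ⟪y, z⟫ = 0) {s t : ℝ} (ht : 0 < t) (hts : t ≤ s) (ht1 : t ≤ 1) (a b : ℝ) :
    ‖x + a • y + b • z‖ ^ 2 ≤ t⁻¹ ^ 2 * ‖x + (s * a) • y + (t * b) • z‖ ^ 2 := by
  rw [norm_add_smul_add_smul_sq hxy hxz hyz, norm_add_smul_add_smul_sq hxy hxz hyz]
  have hq : 1 ≤ t⁻¹ ^ 2 := one_le_pow₀ ((one_le_inv₀ ht).2 ht1)
  have hqs : 1 ≤ (t⁻¹ * s) ^ 2 := one_le_pow₀ (by rwa [inv_mul_eq_div, one_le_div ht])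
  have hqt : (t⁻¹ * t) ^ 2 = 1 := by rw [inv_mul_cancel₀ ht.ne', one_pow]
  calc ‖x‖ ^ 2 + a ^ 2 * ‖y‖ ^ 2 + b ^ 2 * ‖z‖ ^ 2
      ≤ t⁻¹ ^ 2 * ‖x‖ ^ 2 + (t⁻¹ * s) ^ 2 * (a ^ 2 * ‖y‖ ^ 2)
          + (t⁻¹ * t) ^ 2 * (b ^ 2 * ‖z‖ ^ 2) := by
        rw [hqt, one_mul]
        gcongr ?_ + ?_ + _
        · exact le_mul_of_one_le_left (by positivity) hq
        · exact le_mul_of_one_le_left (by positivity) hqs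
    _ = _ := by ring

end OrthogonalTriple

noncomputable def weylComparisonConst (n m : ℝ) : ℝ := (m + n - 1) * (m + n - 2) / (m * (m - 1))

section WeylComparisonConst

variable {n m : ℝ}

theorem weylComparisonConst_eq_mul (hm : 1 < m) :
    weylComparisonConst n m = (1 + (n - 1) / m) * (1 + (n - 1) / (m - 1)) := by
  have : m ≠ 0 := by linarith
  have : m - 1 ≠ 0 := by linarith
  rw [weylComparisonConst]
  field_simp
  ring

theorem one_le_weylComparisonConst (hn : 1 ≤ n) (hm : 1 < m) : 1 ≤ weylComparisonConst n m := by
  rw [weylComparisonConst_eq_mul hm]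
  have hn' : 0 ≤ n - 1 := by linarith
  exact one_le_mul_of_one_le_of_one_le
    (le_add_of_nonneg_right (div_nonneg hn' (by linarith)))
    (le_add_of_nonneg_right (div_nonneg hn' (by linarith)))

theorem weylComparisonConst_antitoneOn (hn : 1 ≤ n) :
    AntitoneOn (weylComparisonConst n) (Set.Ioi 1) := by
  intro a ha b hb hab
  rw [Set.mem_Ioi] at ha hb
  rw [weylComparisonConst_eq_mul ha, weylComparisonConst_eq_mul hb]
  have : 0 ≤ n - 1 := by linarith
  have : 0 < a - 1 := by linarith
  gcongr

theorem inv_weylComparisonConst_le (hn : 1 ≤ n) (hm : 1 < m) :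
    (weylComparisonConst n m)⁻¹ ≤ m / (m + n - 2) := by
  have hp : 0 < m + n - 2 := by linarith
  rw [weylComparisonConst, inv_div, div_le_div_iff₀ (mul_pos (by linarith) hp) hp]
  nlinarith [mul_pos (mul_pos (by linarith : 0 < m) hp) (by linarith : 0 < n)]

theorem inv_weylComparisonConst_mul (hn : 1 < n) (hm : 1 < m) (R : ℝ) :
    (weylComparisonConst n m)⁻¹ * (R / (2 * n * (n - 1)) + 1 / (2 * (m - 1)))
      = m / (2 * (m + n - 1) * (m + n - 2)) * ((m - 1) * R / (n * (n - 1)) + 1) := by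
  have : n ≠ 0 := by linarith
  have : n - 1 ≠ 0 := by linarith
  have : m - 1 ≠ 0 := by linarith
  have : m + n - 1 ≠ 0 := by linarith
  have : m + n - 2 ≠ 0 := by linarith
  rw [weylComparisonConst, inv_div]
  field_simp

end WeylComparisonConst

theorem weighted_weyl_norm_comparison_general {V : Type*} [NormedAddCommGroup V]
    [InnerProductSpace ℝ V]
    (n m δ R : ℝ) (hn : 3 ≤ n) (hδ : 0 < δ) (hm : 1 + δ ≤ m)
    (W Rw G Rm A : V)
    (horth1 : ⟪W, Rw⟫ = 0) (horth2 : ⟪W, G⟫ = 0) (horth3 : ⟪Rw, G⟫ = 0)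
    (hRm : Rm = W + (1 / (n - 2)) • Rw + (R / (2 * n * (n - 1))) • G)
    (hA : A = W + (m / ((m + n - 2) * (n - 2))) • Rw
        + ((m / (2 * (m + n - 1) * (m + n - 2))) * ((m - 1) * R / (n * (n - 1)) + 1)) • G) :
    ‖A‖ ^ 2 ≤ ‖Rm + (1 / (2 * (m - 1))) • G‖ ^ 2 ∧
    ‖Rm + (1 / (2 * (m - 1))) • G‖ ^ 2
      ≤ ((m + n - 1) * (m + n - 2) / (m * (m - 1))) ^ 2 * ‖A‖ ^ 2 ∧
    1 ≤ ((m + n - 1) * (m + n - 2) / (m * (m - 1))) ^ 2 ∧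
    ((m + n - 1) * (m + n - 2) / (m * (m - 1))) ^ 2
      ≤ ((δ + n) * (δ + n - 1) / ((1 + δ) * δ)) ^ 2 := by
  have hm1 : 1 < m := by linarith
  set β := R / (2 * n * (n - 1)) + 1 / (2 * (m - 1))
  set C := weylComparisonConst n m
  have hB : Rm + (1 / (2 * (m - 1))) • G = W + (1 / (n - 2)) • Rw + β • G := by
    rw [hRm]; module
  have hA' : A = W + (m / (m + n - 2) * (1 / (n - 2))) • Rw + (C⁻¹ * β) • G := by
    rw [hA, inv_weylComparisonConst_mul (by linarith) hm1, div_mul_div_comm, mul_one]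
  have hC1 : 1 ≤ C := one_le_weylComparisonConst (by linarith) hm1
  have hCs : C⁻¹ ≤ m / (m + n - 2) := inv_weylComparisonConst_le (by linarith) hm1
  have hs1 : m / (m + n - 2) ≤ 1 := (div_le_one (by linarith)).2 (by linarith)
  have hC0 : 0 < C⁻¹ := inv_pos.2 (zero_lt_one.trans_le hC1)
  have hC1' : C⁻¹ ≤ 1 := inv_le_one_of_one_le₀ hC1
  refine ⟨?_, ?_, one_le_pow₀ hC1, ?_⟩
  · rw [hA', hB]
    exact norm_add_smul_add_smul_sq_le horth1 horth2 horth3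
      (abs_le.2 ⟨by linarith, hs1⟩) (abs_le.2 ⟨by linarith, hC1'⟩) _ _
  · have := norm_add_smul_add_smul_sq_le_inv_sq_mul horth1 horth2 horth3 hC0 hCs hC1'
      (1 / (n - 2)) β
    rwa [inv_inv, ← hB, ← hA'] at this
  · have hCδ : C ≤ weylComparisonConst n (1 + δ) :=
      weylComparisonConst_antitoneOn (by linarith) (by simpa using hδ) (Set.mem_Ioi.2 hm1) hm
    have hCδ_eq : weylComparisonConst n (1 + δ) = (δ + n) * (δ + n - 1) / ((1 + δ) * δ) := by
      rw [weylComparisonConst]; ring_nf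
    exact pow_le_pow_left₀ (zero_le_one.trans hC1) (hCδ_eq ▸ hCδ) 2

/-- Comparison of the norms of the weighted Weyl curvature
`A = W + (m/((m+n-2)(n-2)))·Ric₀∧g + (m/(2(m+n-1)(m+n-2)))·((m-1)R/(n(n-1)) + 1)·g∧g`
(characteristic constant `μ = 1`) and the shifted Riemann curvature
`Rm + (1/(2(m-1)))·g∧g`, for `n ≥ 3` and `m ≥ 1+δ > 1`:
`|A|² ≤ |Rm + (1/(2(m-1)))g∧g|² ≤ C|A|²` with
`C = ((m+n-1)(m+n-2)/(m(m-1)))²`, and `C ≥ 1` is bounded above in terms of `n` and `δ`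
alone, namely `C ≤ ((δ+n)(δ+n-1)/((1+δ)δ))²`.
The orthogonal Ricci decomposition data is as in the norm identity:
the pieces `W`, `Rw = Ric₀∧g`, `G = g∧g` are pairwise orthogonal with
`|Rw|² = (n-2)|Ric₀|²` and `|G|² = 2n(n-1)`. -/
theorem weighted_weyl_norm_comparison {V : Type*} [NormedAddCommGroup V]
    [InnerProductSpace ℝ V]
    (n m δ R Ric0sq : ℝ) (hn : 3 ≤ n) (hδ : 0 < δ) (hm : 1 + δ ≤ m)
    (hRic0sq : 0 ≤ Ric0sq)
    (W Rw G Rm A : V)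
    (horth1 : ⟪W, Rw⟫ = 0) (horth2 : ⟪W, G⟫ = 0) (horth3 : ⟪Rw, G⟫ = 0)
    (hRw : ⟪Rw, Rw⟫ = (n - 2) * Ric0sq)
    (hG : ⟪G, G⟫ = 2 * n * (n - 1))
    (hRm : Rm = W + (1 / (n - 2)) • Rw + (R / (2 * n * (n - 1))) • G)
    (hA : A = W + (m / ((m + n - 2) * (n - 2))) • Rw
        + ((m / (2 * (m + n - 1) * (m + n - 2))) * ((m - 1) * R / (n * (n - 1)) + 1)) • G) :
    ‖A‖ ^ 2 ≤ ‖Rm + (1 / (2 * (m - 1))) • G‖ ^ 2 ∧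
    ‖Rm + (1 / (2 * (m - 1))) • G‖ ^ 2
      ≤ ((m + n - 1) * (m + n - 2) / (m * (m - 1))) ^ 2 * ‖A‖ ^ 2 ∧
    1 ≤ ((m + n - 1) * (m + n - 2) / (m * (m - 1))) ^ 2 ∧
    ((m + n - 1) * (m + n - 2) / (m * (m - 1))) ^ 2
      ≤ ((δ + n) * (δ + n - 1) / ((1 + δ) * δ)) ^ 2 :=
  weighted_weyl_norm_comparison_general n m δ R hn hδ hm W Rw G Rm A horth1 horth2 horth3 hRm hA
end

section
/- Let (M^n,g,1^m dvol) be a compact smooth metric measure space with characteristic constant μ and quasi-Einstein scale u = e^{f/(m+n-2)} with quasi-Einstein constant λ > 0 and m > 1. Then |∇f|² < ((m+n-2)²/(m-1))·μ - ((m+n-2)²/(m+n-1))·λ·e^{-2f/(m+n-2)}, and hence using e^{-ax} ≥ 1-ax one gets |∇f|² ≤ (2(m+n-2)/(m+n-1))·λ·f + (m+n-2)²·(μ/(m-1) - λ/(m+n-1)). -/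
/-!
Since `u = e^{f/c}` with `c = m + n - 2`, we have `|∇f|² = c² |∇u|² / u²` and
`e^{-2f/c} = u⁻²`, so dividing the gradient estimate for `u` by `u²` and multiplying by `c²`
gives the first bound. The second follows from `e^{-t} ≥ 1 - t`, applied with `t = 2f/c`
and multiplied by the nonnegative coefficient `c² λ/(m+n-1)`.
-/

open Real

lemma exp_neg_two_mul_div_eq_inv_sq (y c : ℝ) : exp (-2 * y / c) = (exp (y / c) ^ 2)⁻¹ := by
  rw [← exp_nat_mul, ← exp_neg]
  ring_nf

lemma sq_mul_div_sq_lt_of_add_lt_mul_sq {c u G a b : ℝ} (hc : c ≠ 0) (hu : 0 < u)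
    (h : G + b < a * u ^ 2) : c ^ 2 * G / u ^ 2 < c ^ 2 * a - c ^ 2 * b * (u ^ 2)⁻¹ := by
  have hu2 : 0 < u ^ 2 := by positivity
  have hdiv : G / u ^ 2 < a - b * (u ^ 2)⁻¹ := by
    rw [div_lt_iff₀ hu2, sub_mul, mul_assoc, inv_mul_cancel₀ hu2.ne', mul_one]
    linear_combination h
  calc c ^ 2 * G / u ^ 2 = c ^ 2 * (G / u ^ 2) := mul_div_assoc _ _ _
    _ < c ^ 2 * (a - b * (u ^ 2)⁻¹) := mul_lt_mul_of_pos_left hdiv (by positivity)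
    _ = c ^ 2 * a - c ^ 2 * b * (u ^ 2)⁻¹ := by ring

lemma sq_mul_sub_le_sq_mul_exp_neg_two_mul_div {c B : ℝ} (y : ℝ) (hc : c ≠ 0) (hB : 0 ≤ B) :
    c ^ 2 * B - 2 * c * B * y ≤ c ^ 2 * B * exp (-2 * y / c) :=
  calc c ^ 2 * B - 2 * c * B * y = c ^ 2 * B * (-2 * y / c + 1) := by field_simp; ring
    _ ≤ c ^ 2 * B * exp (-2 * y / c) :=
      mul_le_mul_of_nonneg_left (add_one_le_exp _) (by positivity)

theorem quasiEinstein_gradient_estimate_general {M : Type*}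
    (m n μ lam : ℝ) (hmn : 2 < m + n) (hlam : 0 < lam)
    (f Gu Gf u : M → ℝ)
    (hu : ∀ x, u x = Real.exp (f x / (m + n - 2)))
    (hGf : ∀ x, Gf x = (m + n - 2) ^ 2 * Gu x / (u x) ^ 2)
    (hdil : ∀ x, Gu x + lam / (m + n - 1) < μ / (m - 1) * (u x) ^ 2) :
    (∀ x, Gf x < (m + n - 2) ^ 2 / (m - 1) * μ
        - (m + n - 2) ^ 2 / (m + n - 1) * lam
            * Real.exp (-2 * f x / (m + n - 2))) ∧
    (∀ x, Gf x ≤ 2 * (m + n - 2) / (m + n - 1) * lam * f x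
        + (m + n - 2) ^ 2 * (μ / (m - 1) - lam / (m + n - 1))) := by
  have hc : m + n - 2 ≠ 0 := by linarith
  have hB : 0 ≤ lam / (m + n - 1) := div_nonneg hlam.le (by linarith)
  have sharp : ∀ x, Gf x < (m + n - 2) ^ 2 / (m - 1) * μ
      - (m + n - 2) ^ 2 / (m + n - 1) * lam * exp (-2 * f x / (m + n - 2)) := by
    intro x
    have h := sq_mul_div_sq_lt_of_add_lt_mul_sq hc (by rw [hu x]; positivity) (hdil x)
    rw [hGf x, exp_neg_two_mul_div_eq_inv_sq, ← hu x]
    linear_combination h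
  refine ⟨sharp, fun x => ?_⟩
  have hlin := sq_mul_sub_le_sq_mul_exp_neg_two_mul_div (f x) hc hB
  linear_combination sharp x + hlin

/-- Gradient estimate in the quasi-Einstein scale `f = (m+n-2) log u` (used in the
proof of Proposition 6.11): from `|∇u|² + λ/(m+n-1) < (μ/(m-1))u²` with
`u = e^{f/(m+n-2)}` and `|∇f|² = (m+n-2)²|∇u|²/u²`, one gets
`|∇f|² < ((m+n-2)²/(m-1))μ - ((m+n-2)²/(m+n-1))λ e^{-2f/(m+n-2)}`, and hence, by
`e^{-ax} ≥ 1 - ax`,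
`|∇f|² ≤ (2(m+n-2)/(m+n-1))λ f + (m+n-2)²(μ/(m-1) - λ/(m+n-1))`. -/
theorem quasiEinstein_gradient_estimate {M : Type*}
    (m n μ lam : ℝ) (hm : 1 < m) (hmn : 2 < m + n) (hlam : 0 < lam)
    (f Gu Gf u : M → ℝ)
    (hu : ∀ x, u x = Real.exp (f x / (m + n - 2)))
    (hGu : ∀ x, 0 ≤ Gu x)
    (hGf : ∀ x, Gf x = (m + n - 2) ^ 2 * Gu x / (u x) ^ 2)
    (hdil : ∀ x, Gu x + lam / (m + n - 1) < μ / (m - 1) * (u x) ^ 2) :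
    (∀ x, Gf x < (m + n - 2) ^ 2 / (m - 1) * μ
        - (m + n - 2) ^ 2 / (m + n - 1) * lam
            * Real.exp (-2 * f x / (m + n - 2))) ∧
    (∀ x, Gf x ≤ 2 * (m + n - 2) / (m + n - 1) * lam * f x
        + (m + n - 2) ^ 2 * (μ / (m - 1) - lam / (m + n - 1))) :=
  quasiEinstein_gradient_estimate_general m n μ lam hmn hlam f Gu Gf u hu hGf hdil
end
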